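/- Let (p₀,e₀,m₀) with p₀,e₀,m₀ ≥ 0, p₀+e₀+m₀ = 1 and p₀ > m₀. If p₀ - 4√(p₀ m₀) > 0 then the achievable rate of the three-message quantized decoder, C = P(D_∞ = (1,0,0)), is strictly positive; in particular C ≥ p₀ - 4√(p₀ m₀). -/

import Mathlib

/-!
The potential `F(p,e,m) = p - 4√(pm)` satisfies `2 F(d) ≤ F(d⁺) + F(d⁻)` on the simplex of
densities, so `n ↦ 𝔼[F(D n)]` is nondecreasing: `D n` is a function of the first `n` bits, and the
next bit is a fair coin independent of them. `F` is bounded and continuous, so dominated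
convergence gives `F(D₀) ≤ 𝔼[F(D∞)]`; since `F(1,0,0) = 1` and `F(0,1,0) = 0`, the right side is
`P(D∞ = (1,0,0))`. The inequality for `F` combines AM-GM for the variable-node term with a
polynomial inequality in `√p, √m` for the check-node term.
-/

open MeasureTheory ProbabilityTheory Filter

/-- Variable-node transform of a ternary density `(p,e,m)`. -/
def vplus (d : ℝ × ℝ × ℝ) : ℝ × ℝ × ℝ :=
  (d.1^2 + 2*d.1*d.2.1, d.2.1^2 + 2*d.1*d.2.2, d.2.2^2 + 2*d.2.1*d.2.2)

/-- Check-node transform of a ternary density `(p,e,m)`. -/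
def vminus (d : ℝ × ℝ × ℝ) : ℝ × ℝ × ℝ :=
  (d.1^2 + d.2.2^2, 1 - (1 - d.2.1)^2, 2*d.1*d.2.2)

open Set Real

def iterateBits {α : Type*} (f g : α → α) (x₀ : α) : (n : ℕ) → (Fin n → Bool) → α
  | 0, _ => x₀
  | n + 1, b => if b (Fin.last n) then f (iterateBits f g x₀ n (Fin.init b))
      else g (iterateBits f g x₀ n (Fin.init b))

section iterateBits

variable {Ω α : Type*} {f g : α → α} {x₀ : α}

lemma iterateBits_mem {S : Set α} (hx₀ : x₀ ∈ S) (hf : MapsTo f S S) (hg : MapsTo g S S) :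
    ∀ n b, iterateBits f g x₀ n b ∈ S
  | 0, _ => hx₀
  | n + 1, b => by
    have := iterateBits_mem hx₀ hf hg n (Fin.init b)
    by_cases h : b (Fin.last n) <;> simp [iterateBits, h, hf this, hg this]

lemma eq_iterateBits {B : ℕ → Ω → Bool} {D : ℕ → Ω → α} (hD0 : ∀ ω, D 0 ω = x₀)
    (hstep : ∀ n ω, D (n + 1) ω = if B n ω then f (D n ω) else g (D n ω)) (n : ℕ) :
    D n = fun ω => iterateBits f g x₀ n (fun i => B i ω) := by
  induction n with
  | zero => funext ω; exact hD0 ω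
  | succ n ih => funext ω; rw [hstep, ih]; rfl

end iterateBits

section RandomIteration

variable {Ω α : Type*} [MeasurableSpace Ω] {μ : Measure Ω}

lemma ProbabilityTheory.iIndepFun.indepFun_fin {β : Type*} [MeasurableSpace β] {X : ℕ → Ω → β}
    (hX : iIndepFun X μ) (hXm : ∀ n, Measurable (X n)) (n : ℕ) :
    IndepFun (X n) (fun ω (i : Fin n) => X i ω) μ := by
  have hn : n ∈ ({n} : Finset ℕ) := Finset.mem_singleton_self n
  exact (hX.indepFun_finset {n} (Finset.range n) (by simp) hXm).comp
    (measurable_pi_apply (⟨n, hn⟩ : ({n} : Finset ℕ)))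
    (measurable_pi_lambda (fun x (i : Fin n) => x ⟨i, Finset.mem_range.2 i.2⟩) fun i =>
      measurable_pi_apply _)

lemma integral_ite_of_indepFun [MeasurableSpace α] [IsProbabilityMeasure μ] {b : Ω → Bool}
    {X : Ω → α} (hb : Measurable b) (hX : Measurable X) (hind : IndepFun b X μ)
    (hfair : μ {ω | b ω = true} = 1 / 2) {u v : α → ℝ} (hu : StronglyMeasurable u)
    (hv : StronglyMeasurable v) (hui : Integrable (fun ω => u (X ω)) μ)
    (hvi : Integrable (fun ω => v (X ω)) μ) :
    ∫ ω, (if b ω then u (X ω) else v (X ω)) ∂μ = (∫ ω, u (X ω) ∂μ + ∫ ω, v (X ω) ∂μ) / 2 := by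
  set A := {ω | b ω = true}
  have hA : MeasurableSet[MeasurableSpace.comap b inferInstance] A :=
    ⟨{true}, measurableSet_singleton _, rfl⟩
  have hAm : MeasurableSet A := hb (measurableSet_singleton true)
  have hμA : μ.real A = 1 / 2 := by simp [measureReal_def, A, hfair]
  have hμAc : μ.real Aᶜ = 1 / 2 := by rw [probReal_compl_eq_one_sub hAm, hμA]; norm_num
  have hsplit : (fun ω => if b ω then u (X ω) else v (X ω))
      = fun ω => A.indicator (fun ω => u (X ω)) ω + Aᶜ.indicator (fun ω => v (X ω)) ω := by
    ext ω; by_cases h : b ω <;> simp [A, h]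
  rw [hsplit, integral_add (hui.indicator hAm) (hvi.indicator hAm.compl), integral_indicator hAm,
    integral_indicator hAm.compl,
    Indep.setIntegral_eq_mul hb.comap_le hind hX.aemeasurable hA hu.aestronglyMeasurable,
    Indep.setIntegral_eq_mul hb.comap_le hind hX.aemeasurable hA.compl hv.aestronglyMeasurable,
    hμA, hμAc]
  ring

variable [IsProbabilityMeasure μ] {f g : α → α} {x₀ : α} {B : ℕ → Ω → Bool} {D : ℕ → Ω → α}
  {S : Set α} {φ : α → ℝ} {C : ℝ}

lemma measurable_comp_process {β : Type*} [MeasurableSpace β] (hBmeas : ∀ n, Measurable (B n))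
    (hD0 : ∀ ω, D 0 ω = x₀)
    (hstep : ∀ n ω, D (n + 1) ω = if B n ω then f (D n ω) else g (D n ω)) (ψ : α → β) (n : ℕ) :
    Measurable fun ω => ψ (D n ω) := by
  rw [eq_iterateBits hD0 hstep n]
  exact (measurable_of_countable (ψ ∘ iterateBits f g x₀ n)).comp
    (measurable_pi_lambda _ fun i => hBmeas i)

lemma monotone_integral_comp_process (hBmeas : ∀ n, Measurable (B n)) (hBindep : iIndepFun B μ)
    (hBfair : ∀ n, μ {ω | B n ω = true} = 1 / 2) (hD0 : ∀ ω, D 0 ω = x₀)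
    (hstep : ∀ n ω, D (n + 1) ω = if B n ω then f (D n ω) else g (D n ω))
    (hx₀ : x₀ ∈ S) (hfS : MapsTo f S S) (hgS : MapsTo g S S) (hφC : ∀ x ∈ S, |φ x| ≤ C)
    (hφ : ∀ x ∈ S, 2 * φ x ≤ φ (f x) + φ (g x)) :
    Monotone fun n => ∫ ω, φ (D n ω) ∂μ := by
  refine monotone_nat_of_le_succ fun n => ?_
  set T := iterateBits f g x₀ n
  have hTS : ∀ b, T b ∈ S := iterateBits_mem hx₀ hfS hgS n
  have hXm : Measurable fun ω (i : Fin n) => B i ω := measurable_pi_lambda _ fun i => hBmeas i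
  have hint : ∀ ψ : α → ℝ, (∀ x ∈ S, |ψ x| ≤ C) → Integrable (fun ω => ψ (T fun i => B i ω)) μ :=
    fun ψ hψ => .of_bound ((measurable_of_countable (ψ ∘ T)).comp hXm).aestronglyMeasurable C
      (.of_forall fun ω => hψ _ (hTS _))
  have hDn : D n = fun ω => T fun i => B i ω := eq_iterateBits hD0 hstep n
  have hfi := hint _ fun x hx => hφC _ (hfS hx)
  have hgi := hint _ fun x hx => hφC _ (hgS hx)
  calc ∫ ω, φ (D n ω) ∂μ = ∫ ω, φ (T fun i => B i ω) ∂μ := by rw [hDn]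
    _ ≤ (∫ ω, φ (f (T fun i => B i ω)) ∂μ + ∫ ω, φ (g (T fun i => B i ω)) ∂μ) / 2 := by
      rw [← integral_add hfi hgi, le_div_iff₀ two_pos, mul_comm, ← integral_const_mul]
      exact integral_mono ((hint φ hφC).const_mul 2) (hfi.add hgi) fun ω => hφ _ (hTS _)
    _ = ∫ ω, φ (D (n + 1) ω) ∂μ := by
      simp only [hstep, hDn, apply_ite φ]
      exact (integral_ite_of_indepFun (u := fun b => φ (f (T b))) (v := fun b => φ (g (T b)))
        (hBmeas n) hXm (hBindep.indepFun_fin hBmeas n) (hBfair n)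
        (measurable_of_countable _).stronglyMeasurable
        (measurable_of_countable _).stronglyMeasurable hfi hgi).symm

lemma le_integral_comp_of_tendsto [TopologicalSpace α] (hBmeas : ∀ n, Measurable (B n))
    (hBindep : iIndepFun B μ) (hBfair : ∀ n, μ {ω | B n ω = true} = 1 / 2)
    (hD0 : ∀ ω, D 0 ω = x₀)
    (hstep : ∀ n ω, D (n + 1) ω = if B n ω then f (D n ω) else g (D n ω)) {Dinf : Ω → α}
    (hconv : ∀ᵐ ω ∂μ, Tendsto (fun n => D n ω) atTop (nhds (Dinf ω)))
    (hx₀ : x₀ ∈ S) (hfS : MapsTo f S S) (hgS : MapsTo g S S) (hφc : Continuous φ)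
    (hφC : ∀ x ∈ S, |φ x| ≤ C) (hφ : ∀ x ∈ S, 2 * φ x ≤ φ (f x) + φ (g x)) :
    φ x₀ ≤ ∫ ω, φ (Dinf ω) ∂μ := by
  have hDS : ∀ n ω, D n ω ∈ S := fun n ω => by
    rw [eq_iterateBits hD0 hstep n]; exact iterateBits_mem hx₀ hfS hgS n _
  have hlim : Tendsto (fun n => ∫ ω, φ (D n ω) ∂μ) atTop (nhds (∫ ω, φ (Dinf ω) ∂μ)) :=
    tendsto_integral_of_dominated_convergence (fun _ => C)
      (fun n => (measurable_comp_process hBmeas hD0 hstep φ n).aestronglyMeasurable)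
      (integrable_const C) (fun n => .of_forall fun ω => hφC _ (hDS n ω))
      (hconv.mono fun ω h => (hφc.tendsto _).comp h)
  calc φ x₀ = ∫ ω, φ (D 0 ω) ∂μ := by simp [hD0]
    _ ≤ ∫ ω, φ (Dinf ω) ∂μ := (monotone_integral_comp_process hBmeas hBindep hBfair hD0 hstep
      hx₀ hfS hgS hφC hφ).ge_of_tendsto hlim 0

end RandomIteration

def densitySimplex : Set (ℝ × ℝ × ℝ) :=
  {d | 0 ≤ d.1 ∧ 0 ≤ d.2.1 ∧ 0 ≤ d.2.2 ∧ d.1 + d.2.1 + d.2.2 = 1}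

lemma mapsTo_vplus : MapsTo vplus densitySimplex densitySimplex := by
  rintro ⟨p, e, m⟩ ⟨hp, he, hm, hs : p + e + m = 1⟩
  simp only [densitySimplex, vplus] at hp he hm ⊢
  exact ⟨by positivity, by positivity, by positivity, by linear_combination (p + e + m + 1) * hs⟩

lemma mapsTo_vminus : MapsTo vminus densitySimplex densitySimplex := by
  rintro ⟨p, e, m⟩ ⟨hp, he, hm, hs : p + e + m = 1⟩
  simp only [densitySimplex, vminus] at hp he hm ⊢
  exact ⟨by positivity, by nlinarith, by positivity, by linear_combination (p + m + 1 - e) * hs⟩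

noncomputable def potential (d : ℝ × ℝ × ℝ) : ℝ := d.1 - 4 * √(d.1 * d.2.2)

lemma continuous_potential : Continuous potential := by
  unfold potential; fun_prop

lemma abs_potential_le {d : ℝ × ℝ × ℝ} (hd : d ∈ densitySimplex) : |potential d| ≤ 4 := by
  obtain ⟨hp, he, hm, hs⟩ := hd
  have hsqrt : √(d.1 * d.2.2) ≤ 1 := sqrt_le_one.2 (by nlinarith)
  rw [potential, abs_le]
  constructor <;> nlinarith [sqrt_nonneg (d.1 * d.2.2)]

lemma sqrt_mul_mul_add_le {p e m : ℝ} (hp : 0 ≤ p) (he : 0 ≤ e) (hm : 0 ≤ m) :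
    √((p ^ 2 + 2 * p * e) * (m ^ 2 + 2 * e * m)) ≤ √(p * m) * (p + m + 4 * e) / 2 := by
  have h : (p ^ 2 + 2 * p * e) * (m ^ 2 + 2 * e * m) ≤ (√(p * m) * (p + m + 4 * e) / 2) ^ 2 := by
    rw [div_pow, mul_pow, sq_sqrt (mul_nonneg hp hm)]
    nlinarith [mul_nonneg (mul_nonneg hp hm) (sq_nonneg (p - m))]
  exact sqrt_le_iff.2 ⟨by positivity, h⟩

lemma four_mul_sqrt_le {p m : ℝ} (hp : 0 ≤ p) (hm : 0 ≤ m) :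
    4 * √((p ^ 2 + m ^ 2) * (2 * p * m)) ≤ m ^ 2 - 2 * p * m + 6 * (p + m) * √(p * m) := by
  obtain ⟨a, ha, rfl⟩ : ∃ a, 0 ≤ a ∧ a ^ 2 = p := ⟨√p, sqrt_nonneg _, sq_sqrt hp⟩
  obtain ⟨b, hb, rfl⟩ : ∃ b, 0 ≤ b ∧ b ^ 2 = m := ⟨√m, sqrt_nonneg _, sq_sqrt hm⟩
  rw [← mul_pow, sqrt_sq (mul_nonneg ha hb), ← le_div_iff₀' four_pos]
  have hab := mul_nonneg ha hb
  refine sqrt_le_iff.2 ⟨?_, ?_⟩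
  · nlinarith [mul_nonneg hb (mul_nonneg hab (sq_nonneg (a - b))), pow_nonneg hb 4,
      mul_nonneg hab (pow_nonneg ha 2)]
  · -- 16 times the gap between the two sides equals this sum of nonnegative terms
    have hgap : 0 ≤ 4 * a ^ 4 * b ^ 2 * (a - 3 * b) ^ 2 + 12 * a * b ^ 4 * (a - b) ^ 2 * (2 * a + b)
        + 16 * a ^ 4 * b ^ 4 + 24 * a ^ 3 * b ^ 5 + b ^ 8 := by positivity
    nlinarith [hgap]

lemma two_mul_potential_le {d : ℝ × ℝ × ℝ} (hd : d ∈ densitySimplex) :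
    2 * potential d ≤ potential (vplus d) + potential (vminus d) := by
  obtain ⟨p, e, m⟩ := d
  obtain ⟨hp, he, hm, hs⟩ := hd
  have hplus := sqrt_mul_mul_add_le hp he hm
  have hminus := four_mul_sqrt_le hp hm
  simp only [potential, vplus, vminus] at *
  linear_combination 4 * hplus + hminus + (8 * √(p * m) - 2 * p) * hs

theorem stmt_18_general {Ω : Type*} [MeasurableSpace Ω] (μ : Measure Ω) [IsProbabilityMeasure μ]
    (B : ℕ → Ω → Bool) (D : ℕ → Ω → ℝ × ℝ × ℝ) (Dinf : Ω → ℝ × ℝ × ℝ)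
    (p₀ e₀ m₀ : ℝ) (hp₀ : 0 ≤ p₀) (he₀ : 0 ≤ e₀) (hm₀ : 0 ≤ m₀)
    (hsum : p₀ + e₀ + m₀ = 1)
    (hF : 0 < p₀ - 4 * Real.sqrt (p₀ * m₀))
    (hBmeas : ∀ n, Measurable (B n))
    (hBindep : iIndepFun B μ)
    (hBfair : ∀ n, μ {ω | B n ω = true} = 1/2)
    (hD0 : ∀ ω, D 0 ω = (p₀, e₀, m₀))
    (hstep : ∀ n ω, D (n+1) ω = if B n ω then vplus (D n ω) else vminus (D n ω))
    (hconv : ∀ᵐ ω ∂μ, Tendsto (fun n => D n ω) atTop (nhds (Dinf ω)))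
    (hlim : ∀ᵐ ω ∂μ, Dinf ω = ((1:ℝ), (0:ℝ), (0:ℝ)) ∨ Dinf ω = ((0:ℝ), (1:ℝ), (0:ℝ))) :
    ENNReal.ofReal (p₀ - 4 * Real.sqrt (p₀ * m₀))
        ≤ μ {ω | Dinf ω = ((1:ℝ), (0:ℝ), (0:ℝ))} ∧
      0 < μ {ω | Dinf ω = ((1:ℝ), (0:ℝ), (0:ℝ))} := by
  set E := {ω | Dinf ω = ((1:ℝ), (0:ℝ), (0:ℝ))}
  have hle : potential (p₀, e₀, m₀) ≤ ∫ ω, potential (Dinf ω) ∂μ :=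
    le_integral_comp_of_tendsto (S := densitySimplex) hBmeas hBindep hBfair hD0 hstep hconv
      ⟨hp₀, he₀, hm₀, hsum⟩ mapsTo_vplus mapsTo_vminus continuous_potential
      (fun _ => abs_potential_le) (fun _ => two_mul_potential_le)
  have hDinf : AEMeasurable Dinf μ := aemeasurable_of_tendsto_metrizable_ae'
    (fun n => (measurable_comp_process hBmeas hD0 hstep id n).aemeasurable) hconv
  have hpotential : (fun ω => potential (Dinf ω)) =ᵐ[μ] E.indicator 1 := by
    filter_upwards [hlim] with ω h
    rcases h with h | h <;> simp [E, h, potential]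
  have hE : ∫ ω, potential (Dinf ω) ∂μ = μ.real E := by
    have hEm : NullMeasurableSet E μ := hDinf.nullMeasurable (measurableSet_singleton _)
    rw [integral_congr_ae hpotential, integral_indicator₀ hEm]
    simp
  have hC : ENNReal.ofReal (p₀ - 4 * √(p₀ * m₀)) ≤ μ E :=
    ENNReal.ofReal_le_of_le_toReal (hle.trans_eq hE)
  exact ⟨hC, (ENNReal.ofReal_pos.2 hF).trans_le hC⟩

/-- If the initial density satisfies `F(D₀) = p₀ - 4√(p₀m₀) > 0` (and `p₀ > m₀`), then
the achievable rate `C = P(D_∞ = (1,0,0))` of the three-message quantized decoder is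
strictly positive; in particular `C ≥ p₀ - 4√(p₀ m₀)`. -/
theorem stmt_18 {Ω : Type*} [MeasurableSpace Ω] (μ : Measure Ω) [IsProbabilityMeasure μ]
    (B : ℕ → Ω → Bool) (D : ℕ → Ω → ℝ × ℝ × ℝ) (Dinf : Ω → ℝ × ℝ × ℝ)
    (p₀ e₀ m₀ : ℝ) (hp₀ : 0 ≤ p₀) (he₀ : 0 ≤ e₀) (hm₀ : 0 ≤ m₀)
    (hsum : p₀ + e₀ + m₀ = 1) (hpm : m₀ < p₀)
    (hF : 0 < p₀ - 4 * Real.sqrt (p₀ * m₀))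
    (hBmeas : ∀ n, Measurable (B n))
    (hBindep : iIndepFun B μ)
    (hBfair : ∀ n, μ {ω | B n ω = true} = 1/2)
    (hD0 : ∀ ω, D 0 ω = (p₀, e₀, m₀))
    (hstep : ∀ n ω, D (n+1) ω = if B n ω then vplus (D n ω) else vminus (D n ω))
    (hconv : ∀ᵐ ω ∂μ, Tendsto (fun n => D n ω) atTop (nhds (Dinf ω)))
    (hlim : ∀ᵐ ω ∂μ, Dinf ω = ((1:ℝ), (0:ℝ), (0:ℝ)) ∨ Dinf ω = ((0:ℝ), (1:ℝ), (0:ℝ))) :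
    ENNReal.ofReal (p₀ - 4 * Real.sqrt (p₀ * m₀))
        ≤ μ {ω | Dinf ω = ((1:ℝ), (0:ℝ), (0:ℝ))} ∧
      0 < μ {ω | Dinf ω = ((1:ℝ), (0:ℝ), (0:ℝ))} :=
  stmt_18_general μ B D Dinf p₀ e₀ m₀ hp₀ he₀ hm₀ hsum hF hBmeas hBindep hBfair hD0 hstep hconv hlim
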